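/- arXiv:math/0002128 — 2 statements merged into one kernel-verified Lean document; each statement's English description precedes it below -/
import Mathlib

section
/- Let (A,R) be a cotriangular Hopf algebra over k with Drinfeld element u. Then for every finite-dimensional right A-comodule V, tr(u|_V) = tr((u∘S)|_V); that is, the trace of the Drinfeld element on V equals the trace of its convolution inverse u⁻¹ = u∘S on V. -/
open TensorProduct LinearMap

noncomputable section

universe u
variable {k A : Type u} [Field k] [Ring A] [HopfAlgebra k A]

/-- The convolution product on `Hom_k(A, k)`:  `(f ∗ g)(a) = Σ f(a₁) g(a₂)`. -/
def conv1 (f g : A →ₗ[k] k) : A →ₗ[k] k :=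
  mul' k k ∘ₗ map f g ∘ₗ Coalgebra.comul

/-- The convolution product on `Hom_k(A ⊗ A, k)` (using the tensor-product coalgebra
structure of `A ⊗ A`):  `(f ∗ g)(a ⊗ b) = Σ f(a₁ ⊗ b₁) g(a₂ ⊗ b₂)`. -/
def conv2 (f g : A ⊗[k] A →ₗ[k] k) : A ⊗[k] A →ₗ[k] k :=
  mul' k k ∘ₗ map f g ∘ₗ (Coalgebra.comul : A ⊗[k] A →ₗ[k] (A ⊗[k] A) ⊗[k] (A ⊗[k] A))

/-- The counit of the coalgebra `A ⊗ A`, i.e. `a ⊗ b ↦ ε(a) ε(b)`; this is the unit of the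
convolution algebra `(A ⊗ A)*`. -/
def eps2 : A ⊗[k] A →ₗ[k] k := (Coalgebra.counit : A ⊗[k] A →ₗ[k] k)

/-- Coquasitriangularity of a linear form `R : A ⊗ A → k` with respect to a (possibly
twisted) multiplication `m` on the underlying coalgebra of `A` (with the same unit `1`):
`R` is convolution invertible and
`R(m(a⊗b) ⊗ c) = Σ R(a⊗c₁) R(b⊗c₂)`, `R(a ⊗ m(b⊗c)) = Σ R(a₁⊗c) R(a₂⊗b)`,
`R(a⊗1) = ε(a) = R(1⊗a)`, and `Σ m(b₁⊗a₁) R(a₂⊗b₂) = Σ R(a₁⊗b₁) m(a₂⊗b₂)`. -/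
structure IsCQT (m : A ⊗[k] A →ₗ[k] A) (R : A ⊗[k] A →ₗ[k] k) : Prop where
  conv_invertible : ∃ Rinv, conv2 R Rinv = eps2 ∧ conv2 Rinv R = eps2
  mul_left : R ∘ₗ map m LinearMap.id =
    mul' k k ∘ₗ map R R ∘ₗ (tensorTensorTensorComm k A A A A).toLinearMap ∘ₗ
      map LinearMap.id Coalgebra.comul
  mul_right : R ∘ₗ map LinearMap.id m =
    mul' k k ∘ₗ map R R ∘ₗ (tensorTensorTensorComm k A A A A).toLinearMap ∘ₗ
      map LinearMap.id (TensorProduct.comm k A A).toLinearMap ∘ₗ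
      map Coalgebra.comul LinearMap.id
  unit_right : ∀ a : A, R (a ⊗ₜ 1) = Coalgebra.counit a
  unit_left : ∀ a : A, R (1 ⊗ₜ a) = Coalgebra.counit a
  comm_rel : (TensorProduct.rid k A).toLinearMap ∘ₗ
      map (m ∘ₗ (TensorProduct.comm k A A).toLinearMap) R ∘ₗ
      (Coalgebra.comul : A ⊗[k] A →ₗ[k] (A ⊗[k] A) ⊗[k] (A ⊗[k] A)) =
    (TensorProduct.lid k A).toLinearMap ∘ₗ map R m ∘ₗ
      (Coalgebra.comul : A ⊗[k] A →ₗ[k] (A ⊗[k] A) ⊗[k] (A ⊗[k] A))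

/-- Cotriangularity: coquasitriangular, and the convolution inverse of `R` is `R ∘ τ`. -/
structure IsCT (m : A ⊗[k] A →ₗ[k] A) (R : A ⊗[k] A →ₗ[k] k) extends IsCQT m R : Prop where
  tri_right : conv2 R (R ∘ₗ (TensorProduct.comm k A A).toLinearMap) = eps2
  tri_left : conv2 (R ∘ₗ (TensorProduct.comm k A A).toLinearMap) R = eps2

/-- The Drinfeld element `u ∈ A*`, `u(a) = Σ R(a₂ ⊗ S(a₁))`. -/
def drinfeld (R : A ⊗[k] A →ₗ[k] k) : A →ₗ[k] k :=
  R ∘ₗ map LinearMap.id (HopfAlgebra.antipode (R := k)) ∘ₗ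
    (TensorProduct.comm k A A).toLinearMap ∘ₗ Coalgebra.comul

/-- `ρ` makes `V` into a right `A`-comodule:  `(ρ ⊗ id) ∘ ρ = (id ⊗ Δ) ∘ ρ` and
`(id ⊗ ε) ∘ ρ = id`. -/
structure IsComod (V : Type u) [AddCommGroup V] [Module k V]
    (ρ : V →ₗ[k] V ⊗[k] A) : Prop where
  coassoc : (TensorProduct.assoc k V A A).toLinearMap ∘ₗ map ρ LinearMap.id ∘ₗ ρ =
    map LinearMap.id Coalgebra.comul ∘ₗ ρ
  counit_id : (TensorProduct.rid k V).toLinearMap ∘ₗ map LinearMap.id Coalgebra.counit ∘ₗ ρ =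
    LinearMap.id

/-- The endomorphism `f|_V : v ↦ (id ⊗ f)(ρ(v))` of a right `A`-comodule `(V, ρ)` attached to a
linear form `f ∈ A*`. -/
def coact {V : Type u} [AddCommGroup V] [Module k V] (ρ : V →ₗ[k] V ⊗[k] A)
    (f : A →ₗ[k] k) : V →ₗ[k] V :=
  (TensorProduct.rid k V).toLinearMap ∘ₗ map LinearMap.id f ∘ₗ ρ

/-- Pseudoinvolutivity: `tr(S²|_C) = dim C` for every finite-dimensional subcoalgebra `C ⊆ A`. -/
def Pseudoinvolutive (k A : Type u) [Field k] [Ring A] [HopfAlgebra k A] : Prop :=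
  ∀ C : Submodule k A, FiniteDimensional k C →
    (∀ c ∈ C, Coalgebra.comul c ∈ LinearMap.range (map C.subtype C.subtype)) →
    ∀ h : ∀ x ∈ C, (HopfAlgebra.antipode (R := k) ∘ₗ HopfAlgebra.antipode (R := k)) x ∈ C,
      trace k C ((HopfAlgebra.antipode (R := k) ∘ₗ HopfAlgebra.antipode (R := k)).restrict h) =
        (Module.finrank k C : k)

/-- `c ∈ A*` is a grouplike element of the dual, i.e. an algebra homomorphism `A → k`. -/
def IsGrouplikeForm (c : A →ₗ[k] k) : Prop :=
  c 1 = 1 ∧ ∀ a b : A, c (a * b) = c a * c b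

/-- `c` is central in the convolution algebra `A*`. -/
def IsConvCentral (c : A →ₗ[k] k) : Prop :=
  ∀ f : A →ₗ[k] k, conv1 c f = conv1 f c

/-- The linear form `a ⊗ b ↦ f(a) g(b)` on `A ⊗ A`. -/
def pairForm (f g : A →ₗ[k] k) : A ⊗[k] A →ₗ[k] k := mul' k k ∘ₗ map f g

/-- The cotriangular structure
`R_c = ½ (ε⊗ε + ε⊗c + c⊗ε − c⊗c)` attached to a central grouplike `c ∈ A*` of order `≤ 2`. -/
def Rc (c : A →ₗ[k] k) : A ⊗[k] A →ₗ[k] k :=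
  (2⁻¹ : k) • (pairForm Coalgebra.counit Coalgebra.counit + pairForm Coalgebra.counit c +
    pairForm c Coalgebra.counit - pairForm c c)

/-- A submodule `W ≤ V` is a subcomodule of the comodule `(V, ρ)`. -/
def IsSubcomod {V : Type u} [AddCommGroup V] [Module k V] (ρ : V →ₗ[k] V ⊗[k] A)
    (W : Submodule k V) : Prop :=
  ∀ w ∈ W, ρ w ∈ LinearMap.range (map W.subtype (LinearMap.id : A →ₗ[k] A))

/-- A linear map between comodules is a comodule morphism. -/
def IsComodMap {V W : Type u} [AddCommGroup V] [Module k V] [AddCommGroup W] [Module k W]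
    (ρV : V →ₗ[k] V ⊗[k] A) (ρW : W →ₗ[k] W ⊗[k] A) (f : V →ₗ[k] W) : Prop :=
  ρW ∘ₗ f = map f LinearMap.id ∘ₗ ρV

/-
With respect to a basis of `V`, the trace of `f|_V` is `f(χ)` for the character
`χ = ∑ᵢ cᵢᵢ` of `V`, and `Δχ = ∑ cᵢₗ ⊗ cₗᵢ` is invariant under the flip. For any
coquasitriangular `R`, the form `R ∘ (S ⊗ id)` is a left convolution inverse of `R`, so
cotriangularity gives `R(S x ⊗ y) = R(y ⊗ x)`. Together with `Δ ∘ S = (S ⊗ S) ∘ τ ∘ Δ` this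
turns `u(S x)` into `∑ R(x₁ ⊗ S x₂)`, whereas `u(x) = ∑ R(x₂ ⊗ S x₁)`; the two agree on `χ`.
-/

open WithConv HopfAlgebra Coalgebra

section AntipodeComul

variable {K H B : Type*} [CommSemiring K] [Semiring H] [HopfAlgebra K H] [Semiring B] [Algebra K B]

theorem AlgHom.comp_antipode_convMul_self (f : H →ₐ[K] B) :
    toConv (f.toLinearMap ∘ₗ antipode K) * toConv f.toLinearMap = 1 := by
  have := LinearMap.algHom_comp_convMul_distrib f (toConv (antipode K)) (toConv LinearMap.id)
  rw [LinearMap.antipode_mul_id] at this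
  ext x
  simpa using (LinearMap.congr_fun this x).symm

variable (K H) in
theorem includeLeft_convMul_includeRight :
    toConv (Algebra.TensorProduct.includeLeft : H →ₐ[K] H ⊗[K] H).toLinearMap *
      toConv (Algebra.TensorProduct.includeRight : H →ₐ[K] H ⊗[K] H).toLinearMap =
      toConv (Coalgebra.comul (R := K) (A := H)) := by
  have : LinearMap.mul' K (H ⊗[K] H) ∘ₗ
      map Algebra.TensorProduct.includeLeft.toLinearMap
        Algebra.TensorProduct.includeRight.toLinearMap = LinearMap.id := by ext; simp
  rw [LinearMap.convMul_def, ofConv_toConv, ofConv_toConv, ← LinearMap.comp_assoc, this,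
    LinearMap.id_comp]

variable (K H) in
theorem includeRight_antipode_convMul_includeLeft_antipode :
    toConv ((Algebra.TensorProduct.includeRight : H →ₐ[K] H ⊗[K] H).toLinearMap ∘ₗ antipode K) *
      toConv ((Algebra.TensorProduct.includeLeft : H →ₐ[K] H ⊗[K] H).toLinearMap ∘ₗ
        antipode K) =
      toConv (map (antipode K) (antipode K) ∘ₗ (TensorProduct.comm K H H).toLinearMap ∘ₗ
        Coalgebra.comul) := by
  have : LinearMap.mul' K (H ⊗[K] H) ∘ₗ
      map (Algebra.TensorProduct.includeRight.toLinearMap ∘ₗ antipode K)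
        (Algebra.TensorProduct.includeLeft.toLinearMap ∘ₗ antipode K) =
      map (antipode K) (antipode K) ∘ₗ (TensorProduct.comm K H H).toLinearMap := by ext; simp
  rw [LinearMap.convMul_def, ofConv_toConv, ofConv_toConv, ← LinearMap.comp_assoc, this,
    LinearMap.comp_assoc]

variable (K H) in
theorem HopfAlgebra.comul_comp_antipode :
    Coalgebra.comul ∘ₗ antipode K =
      map (antipode K) (antipode K) ∘ₗ (TensorProduct.comm K H H).toLinearMap ∘ₗ
        Coalgebra.comul := by
  have hG : toConv (map (antipode K) (antipode K) ∘ₗ (TensorProduct.comm K H H).toLinearMap ∘ₗ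
      Coalgebra.comul) * toConv Coalgebra.comul = 1 := by
    rw [← includeRight_antipode_convMul_includeLeft_antipode, ← includeLeft_convMul_includeRight,
      mul_assoc, ← mul_assoc _ _ (toConv Algebra.TensorProduct.includeRight.toLinearMap),
      AlgHom.comp_antipode_convMul_self, one_mul, AlgHom.comp_antipode_convMul_self]
  exact congrArg ofConv (left_inv_eq_right_inv hG LinearMap.comul_right_inv).symm

end AntipodeComul

section Coquasitriangular

variable {R : A ⊗[k] A →ₗ[k] k}

theorem IsCQT.curry_mul (hR : IsCQT (mul' k A) R) (x y : A) :
    toConv (curry R (x * y)) = toConv (curry R x) * toConv (curry R y) := by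
  ext c
  have := LinearMap.congr_fun hR.mul_left ((x ⊗ₜ y) ⊗ₜ c)
  rw [(ℛ k c).convMul_apply]
  simpa [← (ℛ k c).eq, tmul_sum, tensorTensorTensorComm_tmul] using this

theorem IsCQT.curry_one (hR : IsCQT (mul' k A) R) : toConv (curry R 1) = 1 := by
  ext c
  simp [hR.unit_left]

def IsCQT.curryAlgHom (hR : IsCQT (mul' k A) R) : A →ₐ[k] WithConv (A →ₗ[k] k) :=
  AlgHom.ofLinearMap ((WithConv.linearEquiv k _).symm.toLinearMap ∘ₗ curry R) hR.curry_one
    hR.curry_mul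

theorem IsCQT.curryAlgHom_apply (hR : IsCQT (mul' k A) R) (x : A) :
    hR.curryAlgHom x = toConv (curry R x) := rfl

theorem IsCQT.comp_map_antipode_convMul_self (hR : IsCQT (mul' k A) R) :
    toConv (R ∘ₗ map (antipode k) LinearMap.id) * toConv R = 1 := by
  refine WithConv.ext (TensorProduct.ext' fun a b => ?_)
  -- apply the algebra map `x ↦ R(x ⊗ -)` to `∑ S(a₁) a₂ = ε(a) 1` and evaluate at `b`
  have key := congrArg (fun φ : WithConv (A →ₗ[k] k) => φ b)
    (congrArg hR.curryAlgHom (sum_antipode_mul_eq_algebraMap_counit (ℛ k a)))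
  simp only [map_sum, map_mul, AlgHom.commutes] at key
  change (_ * _ : WithConv (A ⊗[k] A →ₗ[k] k)) (a ⊗ₜ b) =
    (1 : WithConv (A ⊗[k] A →ₗ[k] k)) (a ⊗ₜ b)
  rw [((ℛ k a).tmul (ℛ k b)).convMul_apply]
  simpa [Finset.sum_product, (ℛ k b).convMul_apply, IsCQT.curryAlgHom_apply, mul_comm] using key

theorem IsCT.comp_map_antipode (hR : IsCT (mul' k A) R) :
    R ∘ₗ map (antipode k) LinearMap.id = R ∘ₗ (TensorProduct.comm k A A).toLinearMap :=
  congrArg ofConv (left_inv_eq_right_inv hR.comp_map_antipode_convMul_self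
    (a := toConv R) (c := toConv (R ∘ₗ (TensorProduct.comm k A A).toLinearMap))
    (WithConv.ofConv_injective <| by
      simpa [conv2, eps2, LinearMap.convMul_def, LinearMap.convOne_def] using hR.tri_right))

end Coquasitriangular

section Drinfeld

variable {R : A ⊗[k] A →ₗ[k] k}

theorem IsCT.apply_antipode_tmul (hR : IsCT (mul' k A) R) (x y : A) :
    R (antipode k x ⊗ₜ y) = R (y ⊗ₜ x) := by
  simpa using LinearMap.congr_fun hR.comp_map_antipode (x ⊗ₜ y)

theorem IsCT.drinfeld_comp_antipode (hR : IsCT (mul' k A) R) :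
    drinfeld R ∘ₗ antipode k = R ∘ₗ map LinearMap.id (antipode k) ∘ₗ comul := by
  ext x
  have hΔ := LinearMap.congr_fun (comul_comp_antipode k A) x
  simp only [drinfeld, LinearMap.comp_apply, LinearEquiv.coe_coe] at hΔ ⊢
  rw [hΔ]
  rw [← (ℛ k x).eq]
  simp [hR.apply_antipode_tmul]

end Drinfeld

section BasisTensor

variable {K M N ι : Type*} [CommSemiring K] [AddCommMonoid M] [Module K M] [AddCommMonoid N]
  [Module K N] [Fintype ι] (b : Module.Basis ι K M)

theorem Module.Basis.lid_coord_rTensor_sum_tmul (n : ι → N) (i : ι) :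
    TensorProduct.lid K N ((b.coord i).rTensor N (∑ l, b l ⊗ₜ n l)) = n i := by
  classical
  simp [Finsupp.single_apply]

theorem Module.Basis.sum_tmul_lid_coord_rTensor (x : M ⊗[K] N) :
    ∑ i, b i ⊗ₜ TensorProduct.lid K N ((b.coord i).rTensor N x) = x := by
  classical
  have h := (equivFinsuppOfBasisLeft b).symm_apply_apply x
  rw [equivFinsuppOfBasisLeft_symm_apply, Finsupp.sum_fintype _ _ (by simp)] at h
  simpa only [equivFinsuppOfBasisLeft_apply] using h

end BasisTensor

section Comodule

variable {V : Type u} [AddCommGroup V] [Module k V] {ι : Type*} [Fintype ι]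
  (b : Module.Basis ι k V) (ρ : V →ₗ[k] V ⊗[k] A)

def matrixCoeff (i j : ι) : A := TensorProduct.lid k A ((b.coord i).rTensor A (ρ (b j)))

def character : A := ∑ i, matrixCoeff b ρ i i

theorem sum_tmul_matrixCoeff (j : ι) : ∑ i, b i ⊗ₜ matrixCoeff b ρ i j = ρ (b j) :=
  b.sum_tmul_lid_coord_rTensor _

theorem trace_coact (f : A →ₗ[k] k) : trace k V (coact ρ f) = f (character b ρ) := by
  classical
  have hcoact : ∀ j, coact ρ f (b j) = ∑ i, f (matrixCoeff b ρ i j) • b i := fun j => by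
    simp [coact, ← sum_tmul_matrixCoeff b ρ j]
  simp [character, LinearMap.trace_eq_matrix_trace k b, Matrix.trace, LinearMap.toMatrix_apply,
    hcoact, Finsupp.single_apply]

theorem IsComod.comul_matrixCoeff {ρ : V →ₗ[k] V ⊗[k] A} (hρ : IsComod V ρ) (i j : ι) :
    comul (R := k) (matrixCoeff b ρ i j) = ∑ l, matrixCoeff b ρ i l ⊗ₜ matrixCoeff b ρ l j := by
  have h := LinearMap.congr_fun hρ.coassoc (b j)
  simp only [LinearMap.comp_apply, LinearEquiv.coe_coe, ← sum_tmul_matrixCoeff b ρ, map_sum,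
    map_tmul, LinearMap.id_apply, sum_tmul, TensorProduct.assoc_tmul] at h
  rw [Finset.sum_comm] at h
  simp only [← tmul_sum] at h
  have := congrArg (fun x => TensorProduct.lid k (A ⊗[k] A) ((b.coord i).rTensor _ x)) h
  simpa only [b.lid_coord_rTensor_sum_tmul] using this.symm

theorem IsComod.comm_comul_character {ρ : V →ₗ[k] V ⊗[k] A} (hρ : IsComod V ρ) :
    TensorProduct.comm k A A (comul (R := k) (character b ρ)) = comul (character b ρ) := by
  simp only [character, map_sum, hρ.comul_matrixCoeff, TensorProduct.comm_tmul]
  exact Finset.sum_comm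

end Comodule

theorem statement5_general {k A : Type u} [Field k]
    [Ring A] [HopfAlgebra k A]
    (R : A ⊗[k] A →ₗ[k] k) (hR : IsCT (mul' k A) R)
    (V : Type u) [AddCommGroup V] [Module k V] [FiniteDimensional k V]
    (ρ : V →ₗ[k] V ⊗[k] A) (hρ : IsComod V ρ) :
    trace k V (coact ρ (drinfeld R)) =
      trace k V (coact ρ (drinfeld R ∘ₗ HopfAlgebra.antipode (R := k))) := by
  let b := Module.finBasis k V
  let χ := character b ρ
  calc trace k V (coact ρ (drinfeld R))
      = R (map LinearMap.id (antipode k) (TensorProduct.comm k A A (comul χ))) :=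
        trace_coact b ρ _
    _ = R (map LinearMap.id (antipode k) (comul χ)) := by rw [hρ.comm_comul_character b]
    _ = trace k V (coact ρ (drinfeld R ∘ₗ antipode k)) := by
        rw [trace_coact b, hR.drinfeld_comp_antipode]
        rfl

/-- For a cotriangular Hopf algebra `(A, R)` with Drinfeld element `u`, and
every finite-dimensional right `A`-comodule `V`, the trace of `u` on `V` equals the trace of
its convolution inverse `u⁻¹ = u ∘ S` on `V`. -/
theorem statement5 {k A : Type u} [Field k] [IsAlgClosed k] [CharZero k]
    [Ring A] [HopfAlgebra k A]
    (R : A ⊗[k] A →ₗ[k] k) (hR : IsCT (mul' k A) R)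
    (V : Type u) [AddCommGroup V] [Module k V] [FiniteDimensional k V]
    (ρ : V →ₗ[k] V ⊗[k] A) (hρ : IsComod V ρ) :
    trace k V (coact ρ (drinfeld R)) =
      trace k V (coact ρ (drinfeld R ∘ₗ HopfAlgebra.antipode (R := k))) :=
  statement5_general R hR V ρ hρ

end
end

section
/- Let g be a finite-dimensional Lie algebra over a field k of characteristic 0 and let r ∈ g⊗g be a skew-symmetric solution of the classical Yang–Baxter equation which is nondegenerate, i.e. the linear map φ : g* → g, f ↦ (f⊗id)(r), is bijective. Define the bilinear form ω on g by ω(x,y) = (φ⁻¹(x))(y). Then ω is a nondegenerate alternating form satisfying the 2-cocycle identity ω([x,y],z) + ω([y,z],x) + ω([z,x],y) = 0 for all x,y,z ∈ g. -/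
/-!
Write `x = φ f`, `y = φ h`, `z = φ l`. Evaluating the classical Yang–Baxter tensor of `r` in
`g ⊗ g ⊗ g` at `f ⊗ h ⊗ l` gives `f ⁅y, z⁆ - h ⁅x, z⁆ + l ⁅x, y⁆`, which is minus the cyclic
sum `ω ⁅x, y⁆ z + ω ⁅y, z⁆ x + ω ⁅z, x⁆ y` once skew-symmetry of `r` has made `ω` skew. The
hypothesis lives in `U(g) ⊗ U(g) ⊗ U(g)`, where it is the image of that tensor under `ι ⊗ ι ⊗ ι`;
this map is injective because `ι : g → U(g)` is, which is proved as in Poincaré–Birkhoff–Witt by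
letting `g` act on the free module on sorted words in a basis.
-/

open TensorProduct

noncomputable section

attribute [local instance 100] LieRing.ofAssociativeRing

section CommDefect

variable {R : Type*} [CommRing R] {L : Type*} [LieRing L] [LieAlgebra R L]
  {M : Type*} [AddCommGroup M] [Module R M] (ρ : L →ₗ[R] Module.End R M)

def commDefect : L →ₗ[R] L →ₗ[R] Module.End R M :=
  (LinearMap.mul R _).compl₁₂ ρ ρ - (LinearMap.mul R _).flip.compl₁₂ ρ ρ -
    (LieModule.toEnd R L L : L →ₗ[R] Module.End R L).compr₂ ρ

lemma commDefect_apply (x y : L) :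
    commDefect ρ x y = ρ x * ρ y - ρ y * ρ x - ρ ⁅x, y⁆ := rfl

lemma commDefect_swap (x y : L) : commDefect ρ y x = -commDefect ρ x y := by
  rw [commDefect_apply, commDefect_apply, ← lie_skew x y, map_neg]
  abel

lemma commDefect_apply_eq_zero_of_basis {σ : Type*} (b : Module.Basis σ R L) {v : M}
    (h : ∀ p q, commDefect ρ (b p) (b q) v = 0) (x y : L) : commDefect ρ x y v = 0 :=
  LinearMap.congr_fun₂ (LinearMap.ext_basis (B := (commDefect ρ).compr₂ (.applyₗ v)) (B' := 0)
    b b h) x y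

lemma commDefect_apply_apply_eq_zero {v : M} {x y z : L}
    (hv : ∀ x y, commDefect ρ x y v = 0) (hx : commDefect ρ x z (ρ y v) = 0)
    (hy : commDefect ρ y z (ρ x v) = 0) : commDefect ρ x y (ρ z v) = 0 := by
  have hjac : ⁅⁅x, z⁆, y⁆ + ⁅x, ⁅y, z⁆⁆ - ⁅⁅x, y⁆, z⁆ = 0 := by
    rw [leibniz_lie x y z, ← lie_skew y]
    abel
  have J : ρ ⁅⁅x, z⁆, y⁆ v + ρ ⁅x, ⁅y, z⁆⁆ v - ρ ⁅⁅x, y⁆, z⁆ v = 0 := by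
    rw [← LinearMap.add_apply, ← LinearMap.sub_apply, ← map_add, ← map_sub, hjac, map_zero,
      LinearMap.zero_apply]
  have E1 := congrArg (ρ x) (hv y z)
  have E2 := congrArg (ρ y) (hv x z)
  have E3 := congrArg (ρ z) (hv x y)
  have F1 := hv ⁅x, z⁆ y
  have F2 := hv x ⁅y, z⁆
  have F3 := hv ⁅x, y⁆ z
  simp only [commDefect_apply, LinearMap.sub_apply, Module.End.mul_apply, map_sub, map_zero]
    at E1 E2 E3 F1 F2 F3 hx hy ⊢
  -- once `ρ z` is commuted to the front, what is left is `ρ` of the Jacobi sum `hjac`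
  linear_combination (norm := abel) E1 - E2 + hx - hy + E3 + F1 + F2 - F3 + J

lemma commDefect_self (x : L) : commDefect ρ x x = 0 := by
  rw [commDefect_apply, lie_self, map_zero, sub_self, sub_zero]

def lieHomOfCommDefectEqZero (h : commDefect ρ = 0) : L →ₗ⁅R⁆ Module.End R M :=
  { ρ with
    map_lie' := fun {x y} => by
      have := LinearMap.congr_fun₂ h x y
      rw [commDefect_apply, LinearMap.zero_apply, LinearMap.zero_apply, sub_eq_zero] at this
      exact this.symm }

end CommDefect

namespace PBW

variable {R : Type*} [CommRing R] {L : Type*} [LieRing L] [LieAlgebra R L]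
  {σ : Type*} [LinearOrder σ]

local notation "V" => List σ →₀ R

def weight (i : σ) (w : List σ) : ℕ :=
  w.length * w.length + w.countP (· < i)

/- The module `V` is free on the words in `σ`, and the sorted words stand for the monomials of
`Sym L` in the basis `b`. The basis vector `b i` acts on a sorted word `j :: t` by prepending `i`
when `i ≤ j`, and otherwise by the commutation relation `b i (b j t) = b j (b i t) + ⁅b i, b j⁆ t`.
The fuel `f` makes the recursion structural; `weight i w + 1` units of it suffice. -/
def actAux (b : Module.Basis σ R L) : ℕ → σ → List σ → V
  | 0, _, _ => 0
  | _ + 1, i, [] => Finsupp.single [i] 1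
  | f + 1, i, j :: t =>
    if i ≤ j then Finsupp.single (i :: j :: t) 1
    else ((actAux b f i t).sum fun u c => c • actAux b f j u) +
      ((b.repr ⁅b i, b j⁆).sum fun m c => c • actAux b f m t)

variable (b : Module.Basis σ R L)

def basisAct (i : σ) (w : List σ) : V :=
  actAux b (weight i w + 1) i w

def basisActLin (i : σ) : V →ₗ[R] V :=
  Finsupp.linearCombination R fun w => basisAct b i (w.insertionSort (· ≤ ·))

def rep : L →ₗ[R] Module.End R V :=
  b.constr R (basisActLin b)

lemma basisActLin_single (i : σ) {w : List σ} (hw : w.Pairwise (· ≤ ·)) :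
    basisActLin b i (Finsupp.single w 1) = basisAct b i w := by
  rw [basisActLin, Finsupp.linearCombination_single, one_smul, hw.insertionSort_eq]

lemma rep_basis (i : σ) : rep b (b i) = basisActLin b i := by
  simp [rep]

lemma rep_apply (x : L) (v : V) :
    rep b x v = (b.repr x).sum fun m c => c • basisActLin b m v := by
  simp [rep, Module.Basis.constr_apply, LinearMap.finsupp_sum_apply]

lemma weight_lt_of_length_lt {i i' : σ} {u w : List σ} (h : u.length < w.length) :
    weight i' u < weight i w := by
  have : u.countP (· < i') ≤ u.length := List.countP_le_length
  unfold weight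
  nlinarith

lemma weight_orderedInsert_lt {i j : σ} {t : List σ} (hji : j < i) (ht : ∀ a ∈ t, j ≤ a) :
    weight j (t.orderedInsert (· ≤ ·) i) < weight i (j :: t) := by
  have hcount : (t.orderedInsert (· ≤ ·) i).countP (· < j) = 0 := by
    refine List.countP_eq_zero.mpr fun a ha => ?_
    rcases (List.mem_orderedInsert (r := (· ≤ ·))).mp ha with rfl | ha
    · simpa using hji.le
    · simpa using ht a ha
  simp [weight, hcount, List.orderedInsert_length, hji]

lemma orderedInsert_eq_cons_of_forall_le {j : σ} {l : List σ} (h : ∀ a ∈ l, j ≤ a) :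
    l.orderedInsert (· ≤ ·) j = j :: l := by
  cases l with
  | nil => rfl
  | cons a l => exact List.orderedInsert_cons_of_le _ l (h a List.mem_cons_self)

def SortedOfLengthLE (n : ℕ) (v : V) : Prop :=
  ∀ u ∈ v.support, u.Pairwise (· ≤ ·) ∧ u.length ≤ n

namespace SortedOfLengthLE

variable {n : ℕ} {v v' : List σ →₀ R}

lemma mono {m : ℕ} (hv : SortedOfLengthLE n v) (h : n ≤ m) : SortedOfLengthLE m v :=
  fun u hu => ⟨(hv u hu).1, (hv u hu).2.trans h⟩

lemma add (hv : SortedOfLengthLE n v) (hv' : SortedOfLengthLE n v') :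
    SortedOfLengthLE n (v + v') := fun u hu =>
  (Finset.mem_union.mp (Finsupp.support_add hu)).elim (hv u) (hv' u)

lemma single {w : List σ} (hw : w.Pairwise (· ≤ ·)) (hn : w.length ≤ n) :
    SortedOfLengthLE n (Finsupp.single w (1 : R)) := fun u hu => by
  rw [Finset.mem_singleton.mp (Finsupp.support_single_subset hu)]
  exact ⟨hw, hn⟩

lemma sum {α M : Type*} [Zero M] (p : α →₀ M) {F : α → M → V}
    (h : ∀ a ∈ p.support, SortedOfLengthLE n (F a (p a))) :
    SortedOfLengthLE n (p.sum F) := fun u hu => by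
  obtain ⟨a, ha, hu⟩ := Finset.mem_biUnion.mp (Finsupp.support_sum hu)
  exact h a ha u hu

lemma smul (c : R) (hv : SortedOfLengthLE n v) : SortedOfLengthLE n (c • v) :=
  fun u hu => hv u (Finsupp.support_smul hu)

end SortedOfLengthLE

lemma eq_or_mem_support_of_mem_support_single_add {a u : List σ} {e : V}
    (hu : u ∈ (Finsupp.single a 1 + e).support) : u = a ∨ u ∈ e.support := by
  rcases Finset.mem_union.mp (Finsupp.support_add hu) with hu | hu
  · exact .inl (Finset.mem_singleton.mp (Finsupp.support_single_subset hu))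
  · exact .inr hu

-- Proved by induction on `weight`; each of the two halves needs the other at smaller weights.
def ActSpec (i : σ) (w : List σ) : Prop :=
  (∀ f, weight i w < f → actAux b f i w = basisAct b i w) ∧
    ∃ e, basisAct b i w = Finsupp.single (w.orderedInsert (· ≤ ·) i) 1 + e ∧
      SortedOfLengthLE w.length e

lemma ActSpec.sortedOfLengthLE {i : σ} {w : List σ} (hw : w.Pairwise (· ≤ ·))
    (h : ActSpec b i w) : SortedOfLengthLE (w.length + 1) (basisAct b i w) := by
  obtain ⟨-, e, he, hesupp⟩ := h
  rw [he]
  exact (SortedOfLengthLE.single (hw.orderedInsert _ _) (by simp [List.orderedInsert_length])).add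
    (hesupp.mono (Nat.le_succ _))

lemma basisActLin_sortedOfLengthLE {j : σ} {n : ℕ} {v : V} (hv : SortedOfLengthLE n v)
    (h : ∀ u : List σ, u.Pairwise (· ≤ ·) → u.length ≤ n → ActSpec b j u) :
    SortedOfLengthLE (n + 1) (basisActLin b j v) := by
  rw [basisActLin, Finsupp.linearCombination_apply]
  refine SortedOfLengthLE.sum _ fun u hu => .smul _ ?_
  obtain ⟨hus, hun⟩ := hv u hu
  rw [hus.insertionSort_eq]
  exact ((h u hus hun).sortedOfLengthLE b hus).mono (by omega)

lemma actAux_cons_of_lt {i j : σ} {t : List σ} (hw : (j :: t).Pairwise (· ≤ ·)) (hji : j < i)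
    (ih : ∀ i' w', w'.Pairwise (· ≤ ·) → weight i' w' < weight i (j :: t) → ActSpec b i' w')
    {f : ℕ} (hf : weight i (j :: t) ≤ f) :
    actAux b (f + 1) i (j :: t) =
      basisActLin b j (basisAct b i t) + rep b ⁅b i, b j⁆ (Finsupp.single t 1) := by
  obtain ⟨hjt, ht⟩ := List.pairwise_cons.mp hw
  have hshort : ∀ m u, u.length ≤ t.length → weight m u < weight i (j :: t) :=
    fun m u hu => weight_lt_of_length_lt (Nat.lt_succ_of_le hu)
  obtain ⟨hstab, e, he, hesupp⟩ := ih i t ht (hshort i t le_rfl)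
  have hswap : ((actAux b f i t).sum fun u c => c • actAux b f j u) =
      basisActLin b j (basisAct b i t) := by
    rw [hstab f (by have := hshort i t le_rfl; omega), basisActLin,
      Finsupp.linearCombination_apply]
    refine Finsupp.sum_congr fun u hu => ?_
    have hu' : u.Pairwise (· ≤ ·) ∧ weight j u < weight i (j :: t) := by
      rw [he] at hu
      rcases eq_or_mem_support_of_mem_support_single_add hu with rfl | hu
      · exact ⟨ht.orderedInsert _ _, weight_orderedInsert_lt hji hjt⟩
      · exact ⟨(hesupp u hu).1, hshort j u (hesupp u hu).2⟩
    rw [hu'.1.insertionSort_eq, (ih j u hu'.1 hu'.2).1 f (by omega)]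
  have hbracket : ((b.repr ⁅b i, b j⁆).sum fun m c => c • actAux b f m t) =
      rep b ⁅b i, b j⁆ (Finsupp.single t 1) := by
    rw [rep_apply]
    refine Finsupp.sum_congr fun m _ => ?_
    rw [basisActLin_single b m ht, (ih m t ht (hshort m t le_rfl)).1 f
      (by have := hshort m t le_rfl; omega)]
  rw [actAux, if_neg hji.not_ge, hswap, hbracket]

lemma exists_basisAct_cons_eq_single_add {i j : σ} {t : List σ}
    (hw : (j :: t).Pairwise (· ≤ ·)) (hji : j < i)
    (ih : ∀ i' w', w'.Pairwise (· ≤ ·) → weight i' w' < weight i (j :: t) → ActSpec b i' w') :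
    ∃ e, basisAct b i (j :: t) = Finsupp.single ((j :: t).orderedInsert (· ≤ ·) i) 1 + e ∧
      SortedOfLengthLE (j :: t).length e := by
  obtain ⟨hjt, ht⟩ := List.pairwise_cons.mp hw
  have hshort : ∀ m u, u.length ≤ t.length → weight m u < weight i (j :: t) :=
    fun m u hu => weight_lt_of_length_lt (Nat.lt_succ_of_le hu)
  obtain ⟨-, e, he, hesupp⟩ := ih i t ht (hshort i t le_rfl)
  have hT : ∀ a ∈ t.orderedInsert (· ≤ ·) i, j ≤ a := fun a ha =>
    ((List.mem_orderedInsert (r := (· ≤ ·))).mp ha).elim (· ▸ hji.le) (hjt a)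
  have hTs := ht.orderedInsert i _
  obtain ⟨-, e', he', hesupp'⟩ := ih j _ hTs (weight_orderedInsert_lt hji hjt)
  have hins : (t.orderedInsert (· ≤ ·) i).orderedInsert (· ≤ ·) j =
      (j :: t).orderedInsert (· ≤ ·) i := by
    simp [List.orderedInsert, hji.not_ge, orderedInsert_eq_cons_of_forall_le hT]
  refine ⟨e' + basisActLin b j e + rep b ⁅b i, b j⁆ (Finsupp.single t 1), ?_, ?_⟩
  · rw [basisAct, actAux_cons_of_lt b hw hji ih le_rfl, he, map_add, basisActLin_single b j hTs,
      he', hins]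
    abel
  refine ((hesupp'.mono (by simp [List.orderedInsert_length])).add
    (basisActLin_sortedOfLengthLE b hesupp fun u hu hlen => ih j u hu (hshort j u hlen))).add ?_
  rw [rep_apply]
  refine SortedOfLengthLE.sum _ fun m _ => .smul _ ?_
  rw [basisActLin_single b m ht]
  exact (ih m t ht (hshort m t le_rfl)).sortedOfLengthLE b ht

theorem actSpec {i : σ} {w : List σ} (hw : w.Pairwise (· ≤ ·)) : ActSpec b i w := by
  induction hN : weight i w using Nat.strong_induction_on generalizing i w with
  | _ N ih =>
  subst hN
  have ih' : ∀ i' w', w'.Pairwise (· ≤ ·) → weight i' w' < weight i w → ActSpec b i' w' :=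
    fun i' w' hw' h => ih _ h hw' rfl
  rcases w with _ | ⟨j, t⟩
  · refine ⟨fun f hf => ?_, 0, by simp [basisAct, actAux], by simp [SortedOfLengthLE]⟩
    match f, hf with
    | _ + 1, _ => rfl
  by_cases hij : i ≤ j
  · refine ⟨fun f hf => ?_, 0, ?_, by simp [SortedOfLengthLE]⟩
    · match f, hf with
      | _ + 1, _ => simp [basisAct, actAux, hij]
    · simp [basisAct, actAux, hij, List.orderedInsert]
  have hji := not_le.mp hij
  refine ⟨fun f hf => ?_, exists_basisAct_cons_eq_single_add b hw hji ih'⟩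
  match f, hf with
  | f + 1, hf =>
    exact (actAux_cons_of_lt b hw hji ih' (by omega)).trans
      (actAux_cons_of_lt b hw hji ih' le_rfl).symm

lemma basisAct_eq_single_add {i : σ} {w : List σ} (hw : w.Pairwise (· ≤ ·)) :
    ∃ e, basisAct b i w = Finsupp.single (w.orderedInsert (· ≤ ·) i) 1 + e ∧
      SortedOfLengthLE w.length e :=
  (actSpec b hw).2

lemma basisAct_of_forall_le {i : σ} {w : List σ} (h : ∀ a ∈ w, i ≤ a) :
    basisAct b i w = Finsupp.single (i :: w) 1 := by
  cases w with
  | nil => rfl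
  | cons j t => simp [basisAct, actAux, h j List.mem_cons_self]

lemma basisAct_cons_of_lt {i j : σ} {t : List σ} (hw : (j :: t).Pairwise (· ≤ ·)) (hji : j < i) :
    basisAct b i (j :: t) =
      basisActLin b j (basisAct b i t) + rep b ⁅b i, b j⁆ (Finsupp.single t 1) :=
  actAux_cons_of_lt b hw hji (fun _ _ h _ => actSpec b h) le_rfl

lemma commDefect_single_of_forall_le {i j : σ} {w : List σ} (hw : w.Pairwise (· ≤ ·))
    (h : ∀ a ∈ w, j ≤ a) (hji : j < i) :
    commDefect (rep b) (b i) (b j) (Finsupp.single w 1) = 0 := by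
  have hjw : (j :: w).Pairwise (· ≤ ·) := List.pairwise_cons.mpr ⟨h, hw⟩
  simp only [commDefect_apply, LinearMap.sub_apply, Module.End.mul_apply, rep_basis]
  rw [basisActLin_single b j hw, basisAct_of_forall_le b h, basisActLin_single b i hjw,
    basisAct_cons_of_lt b hjw hji, basisActLin_single b i hw]
  abel

lemma commDefect_apply_eq_zero_of_sortedOfLengthLE {x y : L} {n : ℕ}
    (h : ∀ u : List σ, u.Pairwise (· ≤ ·) → u.length ≤ n →
      commDefect (rep b) x y (Finsupp.single u 1) = 0)
    {v : V} (hv : SortedOfLengthLE n v) : commDefect (rep b) x y v = 0 := by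
  rw [← v.sum_single, map_finsuppSum]
  refine Finset.sum_eq_zero fun u hu => ?_
  show commDefect (rep b) x y (Finsupp.single u (v u)) = 0
  rw [← mul_one (v u), ← smul_eq_mul, ← Finsupp.smul_single, map_smul,
    h u (hv u hu).1 (hv u hu).2, smul_zero]

lemma commDefect_single_cons_of_lt {i j l : σ} {t : List σ} (hw : (l :: t).Pairwise (· ≤ ·))
    (hlj : l < j) (hji : j < i)
    (ih : ∀ u : List σ, u.Pairwise (· ≤ ·) → u.length ≤ t.length →
      ∀ p q, commDefect (rep b) (b p) (b q) (Finsupp.single u 1) = 0) :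
    commDefect (rep b) (b i) (b j) (Finsupp.single (l :: t) 1) = 0 := by
  obtain ⟨hl, ht⟩ := List.pairwise_cons.mp hw
  have key : ∀ i' j', l < i' → l ≤ j' →
      commDefect (rep b) (b i') (b l) (rep b (b j') (Finsupp.single t 1)) = 0 := by
    intro i' j' hli' hlj'
    obtain ⟨e, he, hesupp⟩ := basisAct_eq_single_add b (i := j') ht
    have hins : ∀ a ∈ t.orderedInsert (· ≤ ·) j', l ≤ a := fun a ha =>
      ((List.mem_orderedInsert (r := (· ≤ ·))).mp ha).elim (· ▸ hlj') (hl a)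
    rw [rep_basis, basisActLin_single b j' ht, he, map_add,
      commDefect_single_of_forall_le b (ht.orderedInsert j' _) hins hli',
      commDefect_apply_eq_zero_of_sortedOfLengthLE b (fun u hu hlen => ih u hu hlen i' l) hesupp,
      add_zero]
  have hlt : Finsupp.single (l :: t) (1 : R) = rep b (b l) (Finsupp.single t 1) := by
    rw [rep_basis, basisActLin_single b l ht, basisAct_of_forall_le b hl]
  rw [hlt]
  exact commDefect_apply_apply_eq_zero _
    (commDefect_apply_eq_zero_of_basis _ b (ih t ht le_rfl))
    (key i j (hlj.trans hji) hlj.le) (key j i hlj (hlj.trans hji).le)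

theorem commDefect_basis_single_eq_zero {w : List σ} (hw : w.Pairwise (· ≤ ·)) (p q : σ) :
    commDefect (rep b) (b p) (b q) (Finsupp.single w 1) = 0 := by
  induction hn : w.length using Nat.strong_induction_on generalizing w p q with
  | _ n ih =>
  subst hn
  have main : ∀ i j, j < i → commDefect (rep b) (b i) (b j) (Finsupp.single w 1) = 0 := by
    intro i j hji
    by_cases hall : ∀ a ∈ w, j ≤ a
    · exact commDefect_single_of_forall_le b hw hall hji
    obtain ⟨l, t, rfl⟩ : ∃ l t, w = l :: t := List.exists_cons_of_ne_nil (by rintro rfl; simp at hall)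
    have hlj : l < j := by
      by_contra! hjl
      exact hall fun a ha => (List.mem_cons.mp ha).elim (· ▸ hjl)
        (fun ha => hjl.trans ((List.pairwise_cons.mp hw).1 a ha))
    exact commDefect_single_cons_of_lt b hw hlj hji
      fun u hu hlen p q => ih _ (by simp; omega) hu p q rfl
  rcases lt_trichotomy p q with hpq | rfl | hpq
  · rw [commDefect_swap, LinearMap.neg_apply, main q p hpq, neg_zero]
  · rw [commDefect_self, LinearMap.zero_apply]
  · exact main p q hpq

lemma rep_single_insertionSort (x : L) (u : List σ) (c : R) :
    rep b x (Finsupp.single (u.insertionSort (· ≤ ·)) c) = rep b x (Finsupp.single u c) := by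
  simp only [rep_apply, basisActLin, Finsupp.linearCombination_single,
    (List.pairwise_insertionSort _ u).insertionSort_eq]

theorem commDefect_rep : commDefect (rep b) = 0 := by
  ext x y : 2
  refine Finsupp.lhom_ext fun u c => ?_
  have hsort : commDefect (rep b) x y (Finsupp.single u c) =
      c • commDefect (rep b) x y (Finsupp.single (u.insertionSort (· ≤ ·)) 1) := by
    rw [← map_smul, Finsupp.smul_single, smul_eq_mul, mul_one]
    simp only [commDefect_apply, LinearMap.sub_apply, Module.End.mul_apply,
      rep_single_insertionSort]
  rw [hsort, commDefect_apply_eq_zero_of_basis _ b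
    (commDefect_basis_single_eq_zero b (List.pairwise_insertionSort _ u)), smul_zero]
  rfl

def repLie : L →ₗ⁅R⁆ Module.End R V :=
  lieHomOfCommDefectEqZero (rep b) (commDefect_rep b)

lemma rep_apply_single_nil (x : L) :
    rep b x (Finsupp.single [] 1) = Finsupp.mapDomain (fun m => [m]) (b.repr x) := by
  rw [rep_apply, Finsupp.mapDomain]
  refine Finsupp.sum_congr fun m _ => ?_
  rw [basisActLin_single b m List.Pairwise.nil, basisAct_of_forall_le b (by simp),
    Finsupp.smul_single, smul_eq_mul, mul_one]

theorem rep_injective : Function.Injective (rep b) := by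
  refine (injective_iff_map_eq_zero _).mpr fun x hx => ?_
  have h := rep_apply_single_nil b x
  rw [hx, LinearMap.zero_apply, eq_comm, ← Finsupp.mapDomain_zero] at h
  exact b.repr.map_eq_zero_iff.mp
    (Finsupp.mapDomain_injective (fun _ _ h => List.singleton_injective h) h)

end PBW

theorem UniversalEnvelopingAlgebra.ι_injective_of_basis {R L σ : Type*} [CommRing R] [LieRing L]
    [LieAlgebra R L] [LinearOrder σ] (b : Module.Basis σ R L) :
    Function.Injective (ι R : L → UniversalEnvelopingAlgebra R L) := by
  refine fun x y h => PBW.rep_injective b ?_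
  have := congrArg (lift R (PBW.repLie b)) h
  rwa [lift_ι_apply, lift_ι_apply] at this

theorem UniversalEnvelopingAlgebra.ι_injective {R L : Type*} [CommRing R] [LieRing L]
    [LieAlgebra R L] [Module.Free R L] :
    Function.Injective (ι R : L → UniversalEnvelopingAlgebra R L) :=
  letI := IsWellOrder.linearOrder (α := Module.Free.ChooseBasisIndex R L) WellOrderingRel
  ι_injective_of_basis (Module.Free.chooseBasis R L)

section ClassicalYangBaxter

variable {R : Type*} [CommRing R] {L : Type*} [LieRing L] [LieAlgebra R L]

local notation "bracket" => (LieModule.toModuleHom R L L : L ⊗[R] L →ₗ[R] L)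

/-- `s ⊗ t ↦ ⁅s₁₂, t₁₃⁆ + ⁅s₁₂, t₂₃⁆ + ⁅s₁₃, t₂₃⁆`, computed inside `L ⊗ L ⊗ L`. -/
def cybMap : (L ⊗[R] L) ⊗[R] (L ⊗[R] L) →ₗ[R] (L ⊗[R] L) ⊗[R] L :=
  (TensorProduct.assoc R L L L).symm.toLinearMap ∘ₗ TensorProduct.map bracket LinearMap.id ∘ₗ
      (tensorTensorTensorComm R L L L L).toLinearMap +
    TensorProduct.map (TensorProduct.map LinearMap.id bracket ∘ₗ
      (TensorProduct.assoc R L L L).toLinearMap) LinearMap.id ∘ₗ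
      (TensorProduct.assoc R (L ⊗[R] L) L L).symm.toLinearMap +
    TensorProduct.map LinearMap.id bracket ∘ₗ (tensorTensorTensorComm R L L L L).toLinearMap

def cyb (r : L ⊗[R] L) : (L ⊗[R] L) ⊗[R] L :=
  cybMap (r ⊗ₜ r)

@[simp]
lemma cybMap_tmul (a b c d : L) :
    cybMap ((a ⊗ₜ[R] b) ⊗ₜ[R] (c ⊗ₜ[R] d)) =
      (⁅a, c⁆ ⊗ₜ b) ⊗ₜ d + (a ⊗ₜ ⁅b, c⁆) ⊗ₜ d + (a ⊗ₜ c) ⊗ₜ ⁅b, d⁆ := by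
  simp [cybMap, tensorTensorTensorComm_tmul]

lemma map_cyb {L' : Type*} [LieRing L'] [LieAlgebra R L'] (f : L →ₗ⁅R⁆ L') (r : L ⊗[R] L) :
    TensorProduct.map (TensorProduct.map f.toLinearMap f.toLinearMap) f.toLinearMap (cyb r) =
      cyb (TensorProduct.map f.toLinearMap f.toLinearMap r) := by
  have : TensorProduct.map (TensorProduct.map f.toLinearMap f.toLinearMap) f.toLinearMap ∘ₗ
      cybMap = cybMap ∘ₗ TensorProduct.map (TensorProduct.map f.toLinearMap f.toLinearMap)
        (TensorProduct.map f.toLinearMap f.toLinearMap) := by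
    refine TensorProduct.ext_fourfold' fun a b c d => ?_
    simp
  exact LinearMap.congr_fun this (r ⊗ₜ r)

lemma cybMap_tmul_of_algebra {A : Type*} [Ring A] [Algebra R A] (s t : A ⊗[R] A) :
    cybMap (s ⊗ₜ[R] t) =
      let e₁₂ : A ⊗[R] A →ₗ[R] (A ⊗[R] A) ⊗[R] A := (TensorProduct.mk R (A ⊗[R] A) A).flip 1
      let e₁₃ : A ⊗[R] A →ₗ[R] (A ⊗[R] A) ⊗[R] A :=
        TensorProduct.map ((TensorProduct.mk R A A).flip 1) LinearMap.id
      let e₂₃ : A ⊗[R] A →ₗ[R] (A ⊗[R] A) ⊗[R] A :=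
        (TensorProduct.assoc R A A A).symm.toLinearMap ∘ₗ TensorProduct.mk R A (A ⊗[R] A) 1
      (e₁₂ s * e₁₃ t - e₁₃ t * e₁₂ s) + (e₁₂ s * e₂₃ t - e₂₃ t * e₁₂ s) +
        (e₁₃ s * e₂₃ t - e₂₃ t * e₁₃ s) := by
  induction s using TensorProduct.induction_on with
  | zero => simp
  | add s s' hs hs' => simp only [add_tmul, map_add, hs, hs', add_mul, mul_add]; abel
  | tmul a b =>
    induction t using TensorProduct.induction_on with
    | zero => simp
    | add t t' ht ht' => simp only [tmul_add, map_add, ht, ht', add_mul, mul_add]; abel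
    | tmul c d =>
      simp [Ring.lie_def, Algebra.TensorProduct.tmul_mul_tmul, sub_tmul, tmul_sub]

theorem cyb_eq_zero_of_map {K L L' : Type*} [Field K] [LieRing L] [LieAlgebra K L] [LieRing L']
    [LieAlgebra K L'] (f : L →ₗ⁅K⁆ L') (hf : Function.Injective f) {r : L ⊗[K] L}
    (h : cyb (TensorProduct.map f.toLinearMap f.toLinearMap r) = 0) : cyb r = 0 := by
  have hf' : Function.Injective f.toLinearMap := hf
  refine map_injective_of_flat_flat _ _ (map_injective_of_flat_flat _ _ hf' hf') hf' ?_
  rw [map_cyb, h, map_zero]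

def slice (f : Module.Dual R L) : L ⊗[R] L →ₗ[R] L :=
  (TensorProduct.lid R L).toLinearMap ∘ₗ TensorProduct.map f LinearMap.id

@[simp]
lemma slice_tmul (f : Module.Dual R L) (a b : L) : slice f (a ⊗ₜ[R] b) = f a • b := by
  simp [slice]

lemma apply_slice (f h : Module.Dual R L) (r : L ⊗[R] L) :
    h (slice f r) = f (slice h (TensorProduct.comm R L L r)) := by
  induction r using TensorProduct.induction_on with
  | zero => simp
  | tmul a b => simp [mul_comm]
  | add r r' hr hr' => simp only [map_add, hr, hr']

lemma apply_slice_of_skew {r : L ⊗[R] L} (hr : TensorProduct.comm R L L r = -r)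
    (f h : Module.Dual R L) : h (slice f r) = -f (slice h r) := by
  rw [apply_slice, hr, map_neg, map_neg]

lemma dualDistrib_cybMap (f h l : Module.Dual R L) (s t : L ⊗[R] L) :
    dualDistrib R (L ⊗[R] L) L (dualDistrib R L L (f ⊗ₜ h) ⊗ₜ l) (cybMap (s ⊗ₜ t)) =
      f ⁅slice h (TensorProduct.comm R L L s), slice l (TensorProduct.comm R L L t)⁆ +
        h ⁅slice f s, slice l (TensorProduct.comm R L L t)⁆ + l ⁅slice f s, slice h t⁆ := by
  induction s using TensorProduct.induction_on with
  | zero => simp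
  | add s s' hs hs' => simp only [add_tmul, map_add, hs, hs', add_lie]; ring
  | tmul a b =>
    induction t using TensorProduct.induction_on with
    | zero => simp
    | add t t' ht ht' => simp only [tmul_add, map_add, ht, ht', lie_add]; ring
    | tmul c d => simp; ring

lemma dualDistrib_cyb_of_skew {r : L ⊗[R] L} (hr : TensorProduct.comm R L L r = -r)
    (f h l : Module.Dual R L) :
    dualDistrib R (L ⊗[R] L) L (dualDistrib R L L (f ⊗ₜ h) ⊗ₜ l) (cyb r) =
      f ⁅slice h r, slice l r⁆ - h ⁅slice f r, slice l r⁆ + l ⁅slice f r, slice h r⁆ := by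
  rw [cyb, dualDistrib_cybMap, hr, map_neg, map_neg, neg_lie, lie_neg, neg_neg, lie_neg, map_neg]
  ring

end ClassicalYangBaxter

theorem inverse_of_nondegenerate_cybe_solution_is_symplectic_cocycle_general
    {k : Type} [Field k] [CharZero k]
    {g : Type} [LieRing g] [LieAlgebra k g]
    (r : g ⊗[k] g)
    (hskew : TensorProduct.comm k g g r = -r)
    (hcybe :
      let U := UniversalEnvelopingAlgebra k g
      let ι : g →ₗ[k] U := (UniversalEnvelopingAlgebra.ι k).toLinearMap
      let r' : U ⊗[k] U := TensorProduct.map ι ι r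
      let r₁₂ : (U ⊗[k] U) ⊗[k] U := r' ⊗ₜ (1 : U)
      let r₂₃ : (U ⊗[k] U) ⊗[k] U := (TensorProduct.assoc k U U U).symm ((1 : U) ⊗ₜ r')
      let r₁₃ : (U ⊗[k] U) ⊗[k] U :=
        TensorProduct.map ((TensorProduct.mk k U U).flip (1 : U)) LinearMap.id r'
      (r₁₂ * r₁₃ - r₁₃ * r₁₂) + (r₁₂ * r₂₃ - r₂₃ * r₁₂) + (r₁₃ * r₂₃ - r₂₃ * r₁₃) = 0)
    (φ : Module.Dual k g →ₗ[k] g)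
    (hφ : ∀ f : Module.Dual k g, φ f = TensorProduct.lid k g (TensorProduct.map f LinearMap.id r))
    (hbij : Function.Bijective φ)
    (ω : g → g → k)
    (hω : ∀ x y : g, ω x y = (LinearEquiv.ofBijective φ hbij).symm x y) :
    (∀ x : g, ω x x = 0) ∧ (∀ x : g, (∀ y : g, ω x y = 0) → x = 0) ∧
      (∀ x y z : g, ω ⁅x, y⁆ z + ω ⁅y, z⁆ x + ω ⁅z, x⁆ y = 0) := by
  set Φ := LinearEquiv.ofBijective φ hbij
  have hΦ (x : g) : slice (Φ.symm x) r = x := (hφ _).symm.trans (Φ.apply_symm_apply x)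
  have hω_skew (x y : g) : ω x y = -ω y x := by
    rw [hω, hω, ← hΦ y, apply_slice_of_skew hskew, hΦ, hΦ]
  have hcyb : cyb r = 0 := by
    refine cyb_eq_zero_of_map _ UniversalEnvelopingAlgebra.ι_injective ?_
    rw [cyb, cybMap_tmul_of_algebra]
    exact hcybe
  refine ⟨fun x => CharZero.eq_neg_self_iff.mp (hω_skew x x), fun x hx => ?_, fun x y z => ?_⟩
  · refine Φ.symm.injective ((map_zero Φ.symm).symm ▸ LinearMap.ext fun y => ?_)
    rw [← hω, hx, LinearMap.zero_apply]
  · have h := dualDistrib_cyb_of_skew hskew (Φ.symm x) (Φ.symm y) (Φ.symm z)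
    rw [hcyb, map_zero, hΦ, hΦ, hΦ, ← hω, ← hω, ← hω] at h
    rw [hω_skew ⁅x, y⁆, hω_skew ⁅y, z⁆, hω_skew ⁅z, x⁆, ← lie_skew z x, hω y, map_neg, ← hω]
    linear_combination h

/-- Let `g` be a finite-dimensional Lie algebra over a field of
characteristic `0` and `r ∈ g ⊗ g` a skew-symmetric, nondegenerate solution of the classical
Yang–Baxter equation; let `φ : g* → g`, `f ↦ (f ⊗ id) r`, which is assumed bijective.
Then the bilinear form `ω x y = (φ⁻¹ x) y` is a nondegenerate alternating 2-cocycle. -/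
theorem inverse_of_nondegenerate_cybe_solution_is_symplectic_cocycle
    {k : Type} [Field k] [CharZero k]
    {g : Type} [LieRing g] [LieAlgebra k g] [Module.Finite k g]
    (r : g ⊗[k] g)
    (hskew : TensorProduct.comm k g g r = -r)
    (hcybe :
      let U := UniversalEnvelopingAlgebra k g
      let ι : g →ₗ[k] U := (UniversalEnvelopingAlgebra.ι k).toLinearMap
      let r' : U ⊗[k] U := TensorProduct.map ι ι r
      let r₁₂ : (U ⊗[k] U) ⊗[k] U := r' ⊗ₜ (1 : U)
      let r₂₃ : (U ⊗[k] U) ⊗[k] U := (TensorProduct.assoc k U U U).symm ((1 : U) ⊗ₜ r')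
      let r₁₃ : (U ⊗[k] U) ⊗[k] U :=
        TensorProduct.map ((TensorProduct.mk k U U).flip (1 : U)) LinearMap.id r'
      (r₁₂ * r₁₃ - r₁₃ * r₁₂) + (r₁₂ * r₂₃ - r₂₃ * r₁₂) + (r₁₃ * r₂₃ - r₂₃ * r₁₃) = 0)
    (φ : Module.Dual k g →ₗ[k] g)
    (hφ : ∀ f : Module.Dual k g, φ f = TensorProduct.lid k g (TensorProduct.map f LinearMap.id r))
    (hbij : Function.Bijective φ)
    (ω : g → g → k)
    (hω : ∀ x y : g, ω x y = (LinearEquiv.ofBijective φ hbij).symm x y) :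
    (∀ x : g, ω x x = 0) ∧ (∀ x : g, (∀ y : g, ω x y = 0) → x = 0) ∧
      (∀ x y z : g, ω ⁅x, y⁆ z + ω ⁅y, z⁆ x + ω ⁅z, x⁆ y = 0) :=
  inverse_of_nondegenerate_cybe_solution_is_symplectic_cocycle_general r hskew hcybe φ hφ hbij ω hω
end
end
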